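/- Let K be a smooth solution of the oriented associativity equations (AE) on ℝⁿ, let λ, μ ∈ ℝ, and let ψ_λ and ψ_μ be smooth solutions of the vector spectral problems ∂_β ψ_λ^α = λ ∂_β∂_γ K^α ψ_λ^γ and ∂_β ψ_μ^α = μ ∂_β∂_γ K^α ψ_μ^γ. Define Φ^α = λμ ∂_ν∂_κ K^α ψ_λ^ν ψ_μ^κ. Then the pair (G, Φ) with G^α = ψ_λ^α satisfies the linearization of the vector spectral problem with parameter μ: ∂_β Φ^α = μ ∂_β∂_γ G^α ψ_μ^γ + μ ∂_β∂_γ K^α Φ^γ for all α,β. -/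

import Mathlib

/-- Partial derivative of `f` in the `i`-th coordinate direction on `ℝⁿ`. -/
noncomputable def pd {n : ℕ} (i : Fin n) (f : (Fin n → ℝ) → ℝ) : (Fin n → ℝ) → ℝ :=
  fun x => fderiv ℝ f x (Pi.single i 1)

lemma pd_smooth {n : ℕ} {f : (Fin n → ℝ) → ℝ} (hf : ContDiff ℝ (⊤ : ℕ∞) f) (i : Fin n) :
    ContDiff ℝ (⊤ : ℕ∞) (pd i f) :=
  (hf.fderiv_right (m := (⊤ : ℕ∞)) (by simp)).clm_apply contDiff_const

lemma pd_comm {n : ℕ} {f : (Fin n → ℝ) → ℝ} (hf : ContDiff ℝ (⊤ : ℕ∞) f) (i j : Fin n)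
    (x : Fin n → ℝ) : pd i (pd j f) x = pd j (pd i f) x := by
  have hd : DifferentiableAt ℝ (fderiv ℝ f) x :=
    ((hf.fderiv_right (m := (⊤ : ℕ∞)) (by simp)).differentiable (by simp)) x
  have h1 : ∀ (k l : Fin n), pd k (pd l f) x
      = fderiv ℝ (fderiv ℝ f) x (Pi.single k 1) (Pi.single l 1) := by
    intro k l
    have h := fderiv_clm_apply (c := fderiv ℝ f) (u := fun _ => (Pi.single l 1 : Fin n → ℝ))
      hd (differentiableAt_const _)
    have e : pd l f = fun y => (fderiv ℝ f y) ((fun _ => (Pi.single l 1 : Fin n → ℝ)) y) := rfl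
    rw [show pd k (pd l f) x = fderiv ℝ (pd l f) x (Pi.single k 1) from rfl, e, h]
    simp
  rw [h1, h1]
  have hsym : IsSymmSndFDerivAt ℝ f x :=
    (hf.contDiffAt.of_le le_rfl).isSymmSndFDerivAt (n := (⊤ : ℕ∞)) (by rw [minSmoothness_of_isRCLikeNormedField]; exact WithTop.coe_le_coe.mpr (le_top : (2 : ℕ∞) ≤ ⊤))
  exact hsym _ _

lemma pd_mul {n : ℕ} {f g : (Fin n → ℝ) → ℝ} (i : Fin n) (hf : Differentiable ℝ f)
    (hg : Differentiable ℝ g) (x : Fin n → ℝ) :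
    pd i (fun y => f y * g y) x = pd i f x * g x + f x * pd i g x := by
  simp only [pd, fderiv_fun_mul (hf x) (hg x)]
  simp only [ContinuousLinearMap.add_apply, ContinuousLinearMap.smul_apply, smul_eq_mul]
  ring

lemma pd_const_mul {n : ℕ} {f : (Fin n → ℝ) → ℝ} (i : Fin n) (c : ℝ)
    (hf : Differentiable ℝ f) (x : Fin n → ℝ) :
    pd i (fun y => c * f y) x = c * pd i f x := by
  simp only [pd, fderiv_const_mul (hf x) c]
  simp

lemma pd_sum {n : ℕ} {ι : Type*} {s : Finset ι} {F : ι → (Fin n → ℝ) → ℝ} (i : Fin n)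
    (hF : ∀ j ∈ s, Differentiable ℝ (F j)) (x : Fin n → ℝ) :
    pd i (fun y => ∑ j ∈ s, F j y) x = ∑ j ∈ s, pd i (F j) x := by
  simp only [pd, fderiv_fun_sum (fun j hj => (hF j hj) x)]
  simp

lemma aux1 {ι : Type*} [Fintype ι] (A B : ι → ι → ℝ) (M : ι → ℝ) (lam : ℝ) :
    ∑ γ, (lam * ∑ ν, (A γ ν + B γ ν)) * M γ
      = lam * ((∑ γ, ∑ ν, A γ ν * M γ) + (∑ γ, ∑ ν, B γ ν * M γ)) := by
  simp only [Finset.sum_add_distrib, Finset.mul_sum, Finset.sum_mul, mul_add]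
  rw [← Finset.sum_add_distrib]
  refine Finset.sum_congr rfl fun γ _ => ?_
  rw [add_mul, Finset.sum_mul, Finset.sum_mul]
  congr 1 <;> exact Finset.sum_congr rfl fun ν _ => by ring

lemma aux2 {ι : Type*} [Fintype ι] (f g : ι → ℝ) (c : ℝ) :
    ∑ γ, f γ * (c * g γ) = c * ∑ γ, f γ * g γ := by
  rw [Finset.mul_sum]
  exact Finset.sum_congr rfl fun γ _ => by ring

/-- the pair `(G, Φ)` with `G^α = ψ_λ^α` and
`Φ^α = λμ ∂_ν∂_κ K^α ψ_λ^ν ψ_μ^κ` satisfies the linearization of the vector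
spectral problem with parameter `μ`. -/
theorem extended_flow_vector_spectral
    {n : ℕ} (hn : 1 ≤ n)
    (K ψl ψm : Fin n → (Fin n → ℝ) → ℝ) (lam mu : ℝ)
    (hK : ∀ α, ContDiff ℝ (⊤ : ℕ∞) (K α))
    (hψl : ∀ α, ContDiff ℝ (⊤ : ℕ∞) (ψl α))
    (hψm : ∀ α, ContDiff ℝ (⊤ : ℕ∞) (ψm α))
    (hAE : ∀ α β γ ν, ∀ x : Fin n → ℝ,
      ∑ ρ, pd α (pd ρ (K ν)) x * pd β (pd γ (K ρ)) x
        = ∑ ρ, pd α (pd β (K ρ)) x * pd ρ (pd γ (K ν)) x)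
    (hspl : ∀ α β, ∀ x : Fin n → ℝ,
      pd β (ψl α) x = lam * ∑ γ, pd β (pd γ (K α)) x * ψl γ x)
    (hspm : ∀ α β, ∀ x : Fin n → ℝ,
      pd β (ψm α) x = mu * ∑ γ, pd β (pd γ (K α)) x * ψm γ x) :
    ∀ α β, ∀ x : Fin n → ℝ,
      pd β (fun y => lam * mu * ∑ ν, ∑ κ, pd ν (pd κ (K α)) y * ψl ν y * ψm κ y) x
        = mu * (∑ γ, pd β (pd γ (ψl α)) x * ψm γ x)
          + mu * (∑ γ, pd β (pd γ (K α)) x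
              * (lam * mu * ∑ ν, ∑ κ, pd ν (pd κ (K γ)) x * ψl ν x * ψm κ x)) := by
  intro α β x
  -- differentiability facts
  have hD2d : ∀ c (i j : Fin n), Differentiable ℝ (pd i (pd j (K c))) :=
    fun c i j => (pd_smooth (pd_smooth (hK c) j) i).differentiable (by simp)
  have hld : ∀ ν, Differentiable ℝ (ψl ν) := fun ν => (hψl ν).differentiable (by simp)
  have hmd : ∀ ν, Differentiable ℝ (ψm ν) := fun ν => (hψm ν).differentiable (by simp)
  have hterm : ∀ c (ν κ : Fin n),
      Differentiable ℝ (fun y => pd ν (pd κ (K c)) y * ψl ν y * ψm κ y) :=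
    fun c ν κ => ((hD2d c ν κ).mul (hld ν)).mul (hmd κ)
  have hinner : ∀ c (ν : Fin n),
      Differentiable ℝ (fun y => ∑ κ, pd ν (pd κ (K c)) y * ψl ν y * ψm κ y) :=
    fun c ν => Differentiable.fun_sum (fun κ _ => hterm c ν κ)
  have hdouble : ∀ c, Differentiable ℝ
      (fun y => ∑ ν, ∑ κ, pd ν (pd κ (K c)) y * ψl ν y * ψm κ y) :=
    fun c => Differentiable.fun_sum (fun ν _ => hinner c ν)
  -- LHS expansion
  have hLHS : pd β (fun y => lam * mu * ∑ ν, ∑ κ, pd ν (pd κ (K α)) y * ψl ν y * ψm κ y) x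
      = lam * mu * ∑ ν, ∑ κ,
          (pd β (pd ν (pd κ (K α))) x * ψl ν x * ψm κ x
           + pd ν (pd κ (K α)) x * pd β (ψl ν) x * ψm κ x
           + pd ν (pd κ (K α)) x * ψl ν x * pd β (ψm κ) x) := by
    rw [pd_const_mul β _ (hdouble α) x,
        pd_sum β (fun ν _ => hinner α ν) x]
    congr 1
    refine Finset.sum_congr rfl fun ν _ => ?_
    rw [pd_sum β (fun κ _ => hterm α ν κ) x]
    refine Finset.sum_congr rfl fun κ _ => ?_
    rw [pd_mul β ((hD2d α ν κ).fun_mul (hld ν)) (hmd κ) x,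
        pd_mul β (hD2d α ν κ) (hld ν) x]
    ring
  -- RHS first factor expansion
  have hRHS1 : ∀ γ, pd β (pd γ (ψl α)) x
      = lam * ∑ ν, (pd β (pd γ (pd ν (K α))) x * ψl ν x
          + pd γ (pd ν (K α)) x * pd β (ψl ν) x) := by
    intro γ
    have e : pd γ (ψl α) = fun y => lam * ∑ ν, pd γ (pd ν (K α)) y * ψl ν y :=
      funext fun y => hspl α γ y
    rw [e, pd_const_mul β _
        (Differentiable.fun_sum (fun ν _ => (hD2d α γ ν).fun_mul (hld ν))) x,
        pd_sum β (fun ν _ => (hD2d α γ ν).fun_mul (hld ν)) x]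
    congr 1
    exact Finset.sum_congr rfl fun ν _ => pd_mul β (hD2d α γ ν) (hld ν) x
  rw [hLHS]
  simp only [hRHS1, hspm]
  -- keys
  have key1 : ∑ ν, ∑ κ, pd β (pd ν (pd κ (K α))) x * ψl ν x * ψm κ x
      = ∑ γ, ∑ ν, pd β (pd γ (pd ν (K α))) x * ψl ν x * ψm γ x := by
    rw [Finset.sum_comm]
    exact Finset.sum_congr rfl fun κ _ => Finset.sum_congr rfl fun ν _ => by
      rw [show pd ν (pd κ (K α)) = pd κ (pd ν (K α)) from
        funext fun y => pd_comm (hK α) ν κ y]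
  have key2 : ∑ ν, ∑ κ, pd ν (pd κ (K α)) x * pd β (ψl ν) x * ψm κ x
      = ∑ γ, ∑ ν, pd γ (pd ν (K α)) x * pd β (ψl ν) x * ψm γ x := by
    rw [Finset.sum_comm]
    exact Finset.sum_congr rfl fun κ _ => Finset.sum_congr rfl fun ν _ => by
      rw [pd_comm (hK α) ν κ]
  have swap : ∀ ν ρ : Fin n,
      ∑ κ, pd ν (pd κ (K α)) x * pd β (pd ρ (K κ)) x
        = ∑ γ, pd β (pd γ (K α)) x * pd ν (pd ρ (K γ)) x := by
    intro ν ρ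
    rw [hAE ν β ρ α x,
      show (∑ σ, pd ν (pd β (K σ)) x * pd σ (pd ρ (K α)) x)
          = ∑ σ, pd β (pd ν (K σ)) x * pd σ (pd ρ (K α)) x from
        Finset.sum_congr rfl fun σ _ => by rw [pd_comm (hK σ) ν β],
      ← hAE β ν ρ α x]
  have key3 : ∑ ν, ∑ κ, pd ν (pd κ (K α)) x * ψl ν x * (mu * ∑ ρ, pd β (pd ρ (K κ)) x * ψm ρ x)
      = mu * ∑ γ, pd β (pd γ (K α)) x * ∑ ν, ∑ κ, pd ν (pd κ (K γ)) x * ψl ν x * ψm κ x := by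
    calc ∑ ν, ∑ κ, pd ν (pd κ (K α)) x * ψl ν x * (mu * ∑ ρ, pd β (pd ρ (K κ)) x * ψm ρ x)
        = ∑ ν, ∑ κ, ∑ ρ, pd ν (pd κ (K α)) x * pd β (pd ρ (K κ)) x
            * (mu * ψl ν x * ψm ρ x) := by
          refine Finset.sum_congr rfl fun ν _ => Finset.sum_congr rfl fun κ _ => ?_
          simp only [Finset.mul_sum]
          exact Finset.sum_congr rfl fun ρ _ => by ring
      _ = ∑ ν, ∑ ρ, ∑ κ, pd ν (pd κ (K α)) x * pd β (pd ρ (K κ)) x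
            * (mu * ψl ν x * ψm ρ x) :=
          Finset.sum_congr rfl fun ν _ => Finset.sum_comm
      _ = ∑ ν, ∑ ρ, (∑ κ, pd ν (pd κ (K α)) x * pd β (pd ρ (K κ)) x)
            * (mu * ψl ν x * ψm ρ x) := by
          refine Finset.sum_congr rfl fun ν _ => Finset.sum_congr rfl fun ρ _ => ?_
          rw [Finset.sum_mul]
      _ = ∑ ν, ∑ ρ, (∑ γ, pd β (pd γ (K α)) x * pd ν (pd ρ (K γ)) x)
            * (mu * ψl ν x * ψm ρ x) :=
          Finset.sum_congr rfl fun ν _ => Finset.sum_congr rfl fun ρ _ => by rw [swap ν ρ]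
      _ = ∑ ν, ∑ ρ, ∑ γ, pd β (pd γ (K α)) x * pd ν (pd ρ (K γ)) x
            * (mu * ψl ν x * ψm ρ x) := by
          refine Finset.sum_congr rfl fun ν _ => Finset.sum_congr rfl fun ρ _ => ?_
          rw [Finset.sum_mul]
      _ = ∑ ν, ∑ γ, ∑ ρ, pd β (pd γ (K α)) x * pd ν (pd ρ (K γ)) x
            * (mu * ψl ν x * ψm ρ x) :=
          Finset.sum_congr rfl fun ν _ => Finset.sum_comm
      _ = ∑ γ, ∑ ν, ∑ ρ, pd β (pd γ (K α)) x * pd ν (pd ρ (K γ)) x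
            * (mu * ψl ν x * ψm ρ x) := Finset.sum_comm
      _ = mu * ∑ γ, pd β (pd γ (K α)) x
            * ∑ ν, ∑ κ, pd ν (pd κ (K γ)) x * ψl ν x * ψm κ x := by
          rw [Finset.mul_sum]
          refine Finset.sum_congr rfl fun γ _ => ?_
          simp only [Finset.mul_sum]
          exact Finset.sum_congr rfl fun ν _ =>
            Finset.sum_congr rfl fun ρ _ => by ring
  have split : ∑ ν, ∑ κ,
        (pd β (pd ν (pd κ (K α))) x * ψl ν x * ψm κ x
         + pd ν (pd κ (K α)) x * pd β (ψl ν) x * ψm κ x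
         + pd ν (pd κ (K α)) x * ψl ν x * (mu * ∑ ρ, pd β (pd ρ (K κ)) x * ψm ρ x))
      = (∑ ν, ∑ κ, pd β (pd ν (pd κ (K α))) x * ψl ν x * ψm κ x)
        + (∑ ν, ∑ κ, pd ν (pd κ (K α)) x * pd β (ψl ν) x * ψm κ x)
        + ∑ ν, ∑ κ, pd ν (pd κ (K α)) x * ψl ν x
            * (mu * ∑ ρ, pd β (pd ρ (K κ)) x * ψm ρ x) := by
    simp only [Finset.sum_add_distrib]
  rw [split, key1, key2, key3,
    aux1 (fun γ ν => pd β (pd γ (pd ν (K α))) x * ψl ν x)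
      (fun γ ν => pd γ (pd ν (K α)) x * pd β (ψl ν) x) (fun γ => ψm γ x) lam,
    aux2 (fun γ => pd β (pd γ (K α)) x)
      (fun γ => ∑ ν, ∑ κ, pd ν (pd κ (K γ)) x * ψl ν x * ψm κ x) (lam * mu)]
  ring
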